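/- For all natural numbers h, k and every real λ ≥ 1 there exists a constant c such that the following holds: if G is a graph of highway dimension at most h, r > 0, C is an (r,k) vertex cover of G, and 0 < r' ≤ λ·r, then every vertex of the shortcut graph G(C,r') has degree at most c. -/

import Mathlib

open SimpleGraph

/-- The length (total weight) of a walk under an edge-weight function `w`. -/
noncomputable def wlen {V : Type*} {G : SimpleGraph V} (w : Sym2 V → ℝ) {u v : V}
    (p : G.Walk u v) : ℝ :=
  (p.edges.map w).sum

/-- `p` is a subwalk (subpath) of `q`. -/
def IsSubwalk {V : Type*} {G : SimpleGraph V} {u v a b : V}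
    (p : G.Walk u v) (q : G.Walk a b) : Prop :=
  ∃ (q1 : G.Walk a u) (q2 : G.Walk v b), q = (q1.append p).append q2

/-- Shortest-path distance as the infimum of walk lengths. -/
noncomputable def wdist {V : Type*} (G : SimpleGraph V) (w : Sym2 V → ℝ) (u v : V) : ℝ :=
  sInf {x : ℝ | ∃ p : G.Walk u v, x = wlen w p}

/-- A finite connected positively-weighted graph (all weights at least 1) with
unique shortest paths, in which every edge is the unique shortest path between
its endpoints.  `sp u v` is the unique shortest path from `u` to `v`. -/
structure Setting (V : Type) [Fintype V] where
  G : SimpleGraph V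
  w : Sym2 V → ℝ
  connected : G.Connected
  one_le_w : ∀ e ∈ G.edgeSet, 1 ≤ w e
  sp : ∀ u v : V, G.Walk u v
  sp_isPath : ∀ u v : V, (sp u v).IsPath
  sp_shortest : ∀ (u v : V) (q : G.Walk u v), wlen w (sp u v) ≤ wlen w q
  sp_unique : ∀ (u v : V) (q : G.Walk u v), q.IsPath →
    wlen w q = wlen w (sp u v) → q = sp u v
  edge_sp : ∀ (u v : V) (h : G.Adj u v),
    sp u v = SimpleGraph.Walk.cons h SimpleGraph.Walk.nil

namespace Setting

variable {V : Type} [Fintype V]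

/-- Shortest-path distance `d(u,v)`. -/
noncomputable def d (S : Setting V) (u v : V) : ℝ := wlen S.w (S.sp u v)

/-- The ball `B(v,r)`. -/
def ball (S : Setting V) (v : V) (r : ℝ) : Set V := {u : V | S.d v u ≤ r}

/-- `maxedge(p(u,v)) ≤ r`: every edge of the shortest path has weight at most `r`. -/
def maxedgeLE (S : Setting V) (u v : V) (r : ℝ) : Prop :=
  ∀ e ∈ (S.sp u v).edges, S.w e ≤ r

/-- An `(r,k)` vertex cover. -/
def IsVertexCover (S : Setting V) (r : ℝ) (k : ℕ) (C : Set V) : Prop :=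
  (∀ v1 v2 : V, r < S.d v1 v2 → S.maxedgeLE v1 v2 r →
      ∃ c ∈ C, c ∈ (S.sp v1 v2).support) ∧
  (∀ v : V, (S.ball v (2 * r) ∩ C).ncard ≤ k)

/-- Discrete highway dimension at most `h`. -/
def DiscreteHDLE (S : Setting V) (h : ℕ) : Prop :=
  ∀ (v : V) (r : ℝ), 0 < r →
    ∃ C : Set V, C.ncard ≤ h ∧
      ∀ v1 v2 : V, (∀ x ∈ (S.sp v1 v2).support, x ∈ S.ball v (4 * r)) →
        r < S.d v1 v2 → ∃ c ∈ C, c ∈ (S.sp v1 v2).support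

/-- The (unique) shortest path from `v1` to `v2` is `r`-significant:
it has an `r`-witness. -/
def RSignificant (S : Setting V) (r : ℝ) (v1 v2 : V) : Prop :=
  ∃ a b : V, (a = v1 ∨ S.G.Adj a v1) ∧ (b = v2 ∨ S.G.Adj b v2) ∧
    r ≤ S.d a b ∧ IsSubwalk (S.sp v1 v2) (S.sp a b)

/-- The shortest path from `v1` to `v2` is `(r,2r)`-close to `v`,
i.e. it belongs to `S(v,r)`. -/
def InSvr (S : Setting V) (v : V) (r : ℝ) (v1 v2 : V) : Prop :=
  ∃ a b : V, (a = v1 ∨ S.G.Adj a v1) ∧ (b = v2 ∨ S.G.Adj b v2) ∧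
    r ≤ S.d a b ∧ IsSubwalk (S.sp v1 v2) (S.sp a b) ∧
    ∃ x ∈ (S.sp a b).support, S.d v x ≤ 2 * r

/-- Highway dimension at most `h`. -/
def HighwayDimLE (S : Setting V) (h : ℕ) : Prop :=
  ∀ (r : ℝ), 0 < r → ∀ v : V,
    ∃ C : Set V, C.ncard ≤ h ∧
      ∀ v1 v2 : V, S.InSvr v r v1 v2 → ∃ c ∈ C, c ∈ (S.sp v1 v2).support

/-- An `(r,h')`-SPHS. -/
def IsSPHS (S : Setting V) (r : ℝ) (h' : ℕ) (C : Set V) : Prop :=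
  (∀ v1 v2 : V, S.RSignificant r v1 v2 → ∃ c ∈ C, c ∈ (S.sp v1 v2).support) ∧
  (∀ v : V, (C ∩ S.ball v (2 * r)).ncard ≤ h')

/-- Adjacency in the `r`-shortcut graph `G(C,r)`. -/
def shortcutAdj (S : Setting V) (C : Set V) (r : ℝ) (v1 v2 : V) : Prop :=
  v1 ≠ v2 ∧ v1 ∈ C ∧ v2 ∈ C ∧ S.d v1 v2 ≤ r ∧
    ∀ c ∈ C, c ∈ (S.sp v1 v2).support → c = v1 ∨ c = v2

/-- An `(r,η)` path cover, a set of shortest paths represented by their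
endpoint pairs. -/
def IsPathCover (S : Setting V) (r : ℝ) (η : ℕ) (P : Set (V × V)) : Prop :=
  (∀ q ∈ P, r / 4 ≤ S.d q.1 q.2 ∧ S.d q.1 q.2 ≤ r) ∧
  (∀ v1 v2 : V, r / 2 ≤ S.d v1 v2 → S.d v1 v2 ≤ r → S.maxedgeLE v1 v2 (r / 8) →
    ∃ q ∈ P, IsSubwalk (S.sp q.1 q.2) (S.sp v1 v2) ∧
      S.d v1 q.1 ≤ r / 8 ∧ S.d q.2 v2 ≤ r / 8) ∧
  (∀ v : V, {q ∈ P | ∃ x ∈ (S.sp q.1 q.2).support, S.d v x ≤ 4 * r}.ncard ≤ η)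

/-- A pair of vertices of `Cm` is *considered* at level `i`. -/
def Considered (S : Setting V) (Cm : Set V) (i : ℤ) (q : V × V) : Prop :=
  q.1 ∈ Cm ∧ q.2 ∈ Cm ∧
    3 / 4 * (8 : ℝ) ^ i ≤ S.d q.1 q.2 ∧ S.d q.1 q.2 ≤ (8 : ℝ) ^ i ∧
    S.maxedgeLE q.1 q.2 ((8 : ℝ) ^ (i - 1))

/-- `C'` is a valid output of the greedy construction at level `i` from `Cm`. -/
def ValidGreedy (S : Setting V) (Cm : Set V) (i : ℤ) (C' : Set V) : Prop :=
  ∃ (m : ℕ) (q : Fin m → V × V),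
    Function.Injective q ∧
    (∀ p : V × V, S.Considered Cm i p ↔ ∃ j : Fin m, q j = p) ∧
    ∃ Sc : Fin (m + 1) → Set V,
      Sc 0 = ∅ ∧ Sc (Fin.last m) = C' ∧
      ∀ j : Fin m,
        ((∃ c ∈ Sc j.castSucc, c ∈ (S.sp (q j).1 (q j).2).support) →
          Sc j.succ = Sc j.castSucc) ∧
        ((¬ ∃ c ∈ Sc j.castSucc, c ∈ (S.sp (q j).1 (q j).2).support) →
          ∃ c ∈ Cm, c ∈ (S.sp (q j).1 (q j).2).support ∧
            (∀ c' ∈ Cm, c' ∈ (S.sp (q j).1 (q j).2).support →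
              |S.d (q j).1 c - S.d (q j).1 (q j).2 / 2| ≤
                |S.d (q j).1 c' - S.d (q j).1 (q j).2 / 2|) ∧
            Sc j.succ = insert c (Sc j.castSucc))

/-- The set of endpoints of edges of weight greater than `t`. -/
def bigEdgeEnds (S : Setting V) (t : ℝ) : Set V :=
  {x : V | ∃ e ∈ S.G.edgeSet, t < S.w e ∧ x ∈ e}

end Setting

section Aux

set_option linter.unusedSectionVars false

open SimpleGraph Walk

variable {V : Type} [Fintype V] [DecidableEq V]

lemma wlen_append {G : SimpleGraph V} (w : Sym2 V → ℝ) {u v x : V}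
    (p : G.Walk u v) (q : G.Walk v x) :
    wlen w (p.append q) = wlen w p + wlen w q := by
  simp [wlen, Walk.edges_append]

lemma wlen_cons {G : SimpleGraph V} (w : Sym2 V → ℝ) {u v x : V} (h : G.Adj u v)
    (p : G.Walk v x) : wlen w (Walk.cons h p) = w s(u, v) + wlen w p := by
  simp [wlen]

lemma wlen_nil {G : SimpleGraph V} (w : Sym2 V → ℝ) {u : V} :
    wlen w (Walk.nil : G.Walk u u) = 0 := by simp [wlen]

namespace Setting

variable (S : Setting V)

lemma wlen_nonneg {u v : V} (p : S.G.Walk u v) : 0 ≤ wlen S.w p := by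
  apply List.sum_nonneg
  intro x hx
  rcases List.mem_map.1 hx with ⟨e, he, rfl⟩
  have := S.one_le_w e (p.edges_subset_edgeSet he)
  linarith

lemma d_nonneg (u v : V) : 0 ≤ S.d u v := S.wlen_nonneg _

lemma d_le {u v : V} (q : S.G.Walk u v) : S.d u v ≤ wlen S.w q := S.sp_shortest u v q

lemma d_self_nonpos (u : V) : S.d u u ≤ 0 := by
  have := S.d_le (Walk.nil : S.G.Walk u u)
  rwa [wlen_nil] at this

lemma d_triangle (x y u : V) : S.d x u ≤ S.d x y + S.d y u := by
  have := S.d_le ((S.sp x y).append (S.sp y u))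
  rwa [wlen_append] at this

/-- Suffixes of shortest paths are shortest paths, and distances along them add up. -/
lemma suffix_eq {x u y : V} (hy : y ∈ (S.sp x u).support) :
    S.sp y u = (S.sp x u).dropUntil y hy ∧ S.d x y + S.d y u = S.d x u := by
  have hspec := (S.sp x u).take_spec hy
  have hw : wlen S.w ((S.sp x u).takeUntil y hy) + wlen S.w ((S.sp x u).dropUntil y hy)
      = S.d x u := by
    rw [← wlen_append, hspec]; rfl
  have h1 : S.d x y ≤ wlen S.w ((S.sp x u).takeUntil y hy) := S.d_le _
  have h2 : S.d y u ≤ wlen S.w ((S.sp x u).dropUntil y hy) := S.d_le _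
  have h3 := S.d_triangle x y u
  have e2 : wlen S.w ((S.sp x u).dropUntil y hy) = S.d y u := by linarith
  have hpath : ((S.sp x u).dropUntil y hy).IsPath := (S.sp_isPath x u).dropUntil hy
  exact ⟨(S.sp_unique y u _ hpath e2).symm, by linarith⟩

/-- Find the last vertex `a` on the shortest path from `x` to `u` with `d a u ≥ t`,
together with its successor `x₁`. -/
lemma exists_crossing {t : ℝ} (ht : 0 < t) :
    ∀ (n : ℕ) (x u : V), (S.sp x u).length ≤ n → t ≤ S.d x u →
      ∃ a x₁, S.G.Adj a x₁ ∧ a ∈ (S.sp x u).support ∧ x₁ ∈ (S.sp a u).support ∧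
        t ≤ S.d a u ∧ S.d x₁ u < t := by
  intro n
  induction n with
  | zero =>
    intro x u hlen hd
    have h0 : (S.sp x u).length = 0 := Nat.le_zero.mp hlen
    have hxu : x = u := Walk.eq_of_length_eq_zero h0
    subst hxu
    exact absurd (hd.trans (S.d_self_nonpos x)) (not_le.mpr ht)
  | succ n ih =>
    intro x u hlen hd
    cases hsp : S.sp x u with
    | nil =>
      exfalso
      have := S.d_self_nonpos x
      have hd' : t ≤ S.d x x := hd
      linarith
    | cons hadj q =>
      rename_i y
      have hq_path : q.IsPath := by
        have := S.sp_isPath x u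
        rw [hsp] at this
        exact this.of_cons
      have hd_eq : S.d x u = S.w s(x, y) + wlen S.w q := by
        show wlen S.w (S.sp x u) = _
        rw [hsp, wlen_cons]
      have h2 : S.d y u ≤ wlen S.w q := S.d_le q
      have h3 : S.d x u ≤ S.w s(x, y) + S.d y u := by
        have := S.d_le (Walk.cons hadj (S.sp y u))
        rwa [wlen_cons] at this
      have hq_w : wlen S.w q = S.d y u := by linarith
      have hq_sp : q = S.sp y u := S.sp_unique y u q hq_path hq_w
      by_cases hc : S.d y u < t
      · refine ⟨x, y, hadj, Walk.start_mem_support _, ?_, hd, hc⟩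
        rw [hsp]
        rw [Walk.support_cons]
        exact List.mem_cons_of_mem _ q.start_mem_support
      · push_neg at hc
        have hlen' : (S.sp y u).length ≤ n := by
          rw [← hq_sp]
          have : (S.sp x u).length = q.length + 1 := by rw [hsp]; simp
          omega
        obtain ⟨a, x₁, h1, h2', h3', h4, h5⟩ := ih y u hlen' hc
        refine ⟨a, x₁, h1, ?_, h3', h4, h5⟩
        rw [Walk.support_cons]
        apply List.mem_cons_of_mem
        rw [hq_sp]
        exact h2'

/-- No vertex of `C` lies on the shortest path from `x` to `u` except possibly the
endpoints. -/
def Pfree (C : Set V) (x u : V) : Prop :=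
  ∀ c' ∈ C, c' ∈ (S.sp x u).support → c' = x ∨ c' = u

lemma step {h : ℕ} (hHD : S.HighwayDimLE h) (C : Set V) {t : ℝ} (ht : 0 < t) (x : V) :
    ∃ H : Set V, H.ncard ≤ h ∧ ∀ u ∈ C, t < S.d x u → S.d x u ≤ 2 * t → S.Pfree C x u →
      ∃ c ∈ H, S.d c u < t ∧ S.Pfree C c u := by
  obtain ⟨H, hHcard, hHhit⟩ := hHD t ht x
  refine ⟨H, hHcard, ?_⟩
  intro u huC hdu hdu2 hP
  obtain ⟨a, x₁, hadj, haS, hx₁S, hta, hx₁t⟩ :=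
    S.exists_crossing ht (S.sp x u).length x u le_rfl hdu.le
  obtain ⟨hspa, hda⟩ := S.suffix_eq haS
  obtain ⟨hspx₁, hdx₁⟩ := S.suffix_eq hx₁S
  have hIn : S.InSvr x t x₁ u := by
    refine ⟨a, u, Or.inr hadj, Or.inl rfl, hta, ?_, ⟨a, (S.sp a u).start_mem_support, ?_⟩⟩
    · refine ⟨(S.sp a u).takeUntil x₁ hx₁S, Walk.nil, ?_⟩
      rw [Walk.append_nil, hspx₁, Walk.take_spec]
    · linarith
  obtain ⟨c, hcH, hcsup⟩ := hHhit x₁ u hIn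
  obtain ⟨_, hd3⟩ := S.suffix_eq hcsup
  have hdcu : S.d c u < t := by
    have := S.d_nonneg x₁ c
    linarith
  have hcax : c ∈ (S.sp a u).support := by
    have hcsup' := hcsup
    rw [hspx₁] at hcsup'
    exact Walk.support_dropUntil_subset _ _ hcsup'
  have hcx : c ∈ (S.sp x u).support := by
    rw [hspa] at hcax
    exact Walk.support_dropUntil_subset _ _ hcax
  obtain ⟨hspc, _⟩ := S.suffix_eq hcx
  refine ⟨c, hcH, hdcu, ?_⟩
  intro c' hc'C hc'sup
  have hsub : (S.sp c u).support ⊆ (S.sp x u).support := by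
    rw [hspc]
    exact Walk.support_dropUntil_subset _ _
  rcases hP c' hc'C (hsub hc'sup) with h1 | h1
  · by_cases hcx' : c = x
    · left; rw [h1, hcx']
    · exfalso
      have hnodup := (S.sp_isPath x u).support_nodup
      rw [← Walk.take_spec (S.sp x u) hcx, Walk.support_append] at hnodup
      have hx1 : x ∈ ((S.sp x u).takeUntil c hcx).support := Walk.start_mem_support _
      have hx2 : x ∈ ((S.sp x u).dropUntil c hcx).support.tail := by
        have hx' : x ∈ (S.sp c u).support := h1 ▸ hc'sup
        rw [hspc] at hx'
        rw [Walk.support_eq_cons ((S.sp x u).dropUntil c hcx)] at hx'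
        rcases List.mem_cons.mp hx' with h2 | h2
        · exact absurd h2.symm hcx'
        · exact h2
      exact (List.nodup_append'.mp hnodup).2.2 hx1 hx2
  · exact Or.inr h1

end Setting

lemma aux_biUnion {α : Type} {V : Type} [Fintype V] (H : Set α) (hH : H.Finite)
    (f : α → Set V) (m : ℕ) (hm : ∀ c, (f c).ncard ≤ m) :
    (⋃ c ∈ H, f c).ncard ≤ H.ncard * m := by
  classical
  obtain ⟨F, rfl⟩ := hH.exists_finset_coe
  induction F using Finset.induction_on with
  | empty => simp
  | insert a s ha ih =>
    rw [Finset.coe_insert, Set.biUnion_insert]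
    calc (f a ∪ ⋃ c ∈ (s : Set α), f c).ncard
        ≤ (f a).ncard + (⋃ c ∈ (s : Set α), f c).ncard := Set.ncard_union_le _ _
      _ ≤ m + (s : Set α).ncard * m := add_le_add (hm a) (ih (Set.toFinite _))
      _ = (insert a (s : Set α)).ncard * m := by
          rw [Set.ncard_insert_of_notMem (by simpa using ha)]
          ring

namespace Setting

variable {V : Type} [Fintype V] [DecidableEq V] (S : Setting V)

lemma count {h k : ℕ} (hHD : S.HighwayDimLE h) {r : ℝ} (hr : 0 < r) {C : Set V}
    (hC : S.IsVertexCover r k C) :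
    ∀ (n : ℕ) (x : V),
      {u : V | u ∈ C ∧ S.d x u ≤ 2 ^ n * (2 * r) ∧ S.Pfree C x u}.ncard ≤ (h + 1) ^ n * k := by
  intro n
  induction n with
  | zero =>
    intro x
    have hsub : {u : V | u ∈ C ∧ S.d x u ≤ 2 ^ 0 * (2 * r) ∧ S.Pfree C x u}
        ⊆ S.ball x (2 * r) ∩ C := by
      rintro u ⟨h1, h2, _⟩
      refine ⟨?_, h1⟩
      show S.d x u ≤ 2 * r
      rw [pow_zero, one_mul] at h2
      exact h2
    calc {u : V | u ∈ C ∧ S.d x u ≤ 2 ^ 0 * (2 * r) ∧ S.Pfree C x u}.ncard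
        ≤ (S.ball x (2 * r) ∩ C).ncard := Set.ncard_le_ncard hsub (Set.toFinite _)
      _ ≤ k := hC.2 x
      _ = (h + 1) ^ 0 * k := by ring
  | succ n ih =>
    intro x
    set t : ℝ := 2 ^ n * (2 * r) with ht_def
    have ht : 0 < t := by positivity
    obtain ⟨H, hHcard, hkey⟩ := S.step hHD C ht x
    have h2t : (2 : ℝ) ^ (n + 1) * (2 * r) = 2 * t := by rw [ht_def]; ring
    have hsub : {u : V | u ∈ C ∧ S.d x u ≤ 2 ^ (n + 1) * (2 * r) ∧ S.Pfree C x u}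
        ⊆ {u : V | u ∈ C ∧ S.d x u ≤ t ∧ S.Pfree C x u}
          ∪ ⋃ c ∈ H, {u : V | u ∈ C ∧ S.d c u ≤ t ∧ S.Pfree C c u} := by
      rintro u ⟨h1, h2, h3⟩
      by_cases hle : S.d x u ≤ t
      · exact Or.inl ⟨h1, hle, h3⟩
      · push_neg at hle
        rw [h2t] at h2
        obtain ⟨c, hcH, hdcu, hPc⟩ := hkey u h1 hle h2 h3
        exact Or.inr (Set.mem_biUnion hcH ⟨h1, hdcu.le, hPc⟩)
    calc {u : V | u ∈ C ∧ S.d x u ≤ 2 ^ (n + 1) * (2 * r) ∧ S.Pfree C x u}.ncard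
        ≤ ({u : V | u ∈ C ∧ S.d x u ≤ t ∧ S.Pfree C x u}
          ∪ ⋃ c ∈ H, {u : V | u ∈ C ∧ S.d c u ≤ t ∧ S.Pfree C c u}).ncard :=
          Set.ncard_le_ncard hsub (Set.toFinite _)
      _ ≤ {u : V | u ∈ C ∧ S.d x u ≤ t ∧ S.Pfree C x u}.ncard
          + (⋃ c ∈ H, {u : V | u ∈ C ∧ S.d c u ≤ t ∧ S.Pfree C c u}).ncard :=
          Set.ncard_union_le _ _
      _ ≤ (h + 1) ^ n * k + H.ncard * ((h + 1) ^ n * k) := by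
          refine add_le_add (ih x) ?_
          exact aux_biUnion H (Set.toFinite _) _ _ (fun c => ih c)
      _ ≤ (h + 1) ^ n * k + h * ((h + 1) ^ n * k) := by
          exact Nat.add_le_add_left (Nat.mul_le_mul_right _ hHcard) _
      _ = (h + 1) ^ (n + 1) * k := by ring

end Setting

end Aux

/-- Bounded degree of the shortcut graph `G(C,r')` of an
`(r,k)` vertex cover `C`, when `0 < r' ≤ λ·r`. -/
theorem stmt4 (h k : ℕ) (lam : ℝ) (hlam : 1 ≤ lam) :
    ∃ c : ℕ, ∀ (V : Type) [Fintype V] (S : Setting V), S.HighwayDimLE h →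
      ∀ r : ℝ, 0 < r → ∀ C : Set V, S.IsVertexCover r k C →
        ∀ r' : ℝ, 0 < r' → r' ≤ lam * r →
          ∀ v : V, {u : V | S.shortcutAdj C r' v u}.ncard ≤ c := by
  refine ⟨(h + 1) ^ (Nat.ceil lam) * k, ?_⟩
  intro V _ S hHD r hr C hC r' hr' hr'le v
  letI := Classical.decEq V
  set n := Nat.ceil lam with hn
  have hlam2 : lam ≤ 2 ^ n * 2 := by
    have h1 : lam ≤ (n : ℝ) := Nat.le_ceil lam
    have h2 : (n : ℝ) ≤ 2 ^ n := by
      exact_mod_cast (Nat.lt_two_pow_self (n := n)).le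
    have h3 : (2 : ℝ) ^ n ≤ 2 ^ n * 2 := by nlinarith [pow_pos (by norm_num : (0:ℝ) < 2) n]
    linarith
  have hsub : {u : V | S.shortcutAdj C r' v u}
      ⊆ {u : V | u ∈ C ∧ S.d v u ≤ 2 ^ n * (2 * r) ∧ S.Pfree C v u} := by
    rintro u ⟨_, _, huC, hd, hmin⟩
    refine ⟨huC, ?_, fun c' hc' hsup => hmin c' hc' hsup⟩
    calc S.d v u ≤ r' := hd
      _ ≤ lam * r := hr'le
      _ ≤ 2 ^ n * (2 * r) := by nlinarith
  exact (Set.ncard_le_ncard hsub (Set.toFinite _)).trans (S.count hHD hr hC n v)
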